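/- arXiv:2205.13028 — 3 statements merged into one kernel-verified Lean document; each statement's English description precedes it below -/
import Mathlib

section
/- Let ε ∈ (0,1), δ ∈ (0,1), let A be any probability measure on [0,∞] and let u : [0,∞] → [0,1] be a measurable, monotonically decreasing utility function, and let κ ∈ (0,∞) satisfy u(κ) = ε/2. If t₁, …, t_m are independent samples from A with m ≥ (ln(2/δ)/2) · ((2−ε)/ε)², and t_j^{(κ)} := min{t_j, κ} denotes the capped samples, then with probability at least 1−δ the capped sample mean utility is within ε of the true uncapped mean utility: Pr( | (1/m) Σ_{j=1}^m u(t_j^{(κ)}) − E_{t∼A}[u(t)] | ≥ ε ) ≤ δ. -/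
/-!
Capping at `κ` can only raise the utility of a run, and by at most `u κ = ε / 2`, so the mean
capped utility lies within `ε / 2` above the true mean utility. A deviation of `ε` of the capped
sample mean from the true mean therefore forces a deviation of at least `ε / 2` from its own mean.
The capped utilities take values in `[ε / 2, 1]`, an interval of length `1 - ε / 2`, so Hoeffding's
inequality bounds the probability of this by `2 exp (-2 m ε² / (2 - ε)²)`, which the sample size
makes at most `δ`.
-/

open MeasureTheory ProbabilityTheory Real Set
open scoped ENNReal

section Hoeffding

variable {α ι : Type*} [MeasurableSpace α] [Fintype ι] (A : Measure α) [IsProbabilityMeasure A]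
  {f : α → ℝ} {a b : ℝ}

theorem measureReal_sum_sub_integral_ge_le (hf : Measurable f) (hfab : ∀ x, f x ∈ Icc a b)
    {r : ℝ} (hr : 0 ≤ r) :
    (Measure.pi fun _ : ι => A).real {t | r ≤ ∑ j, (f (t j) - ∫ x, f x ∂A)}
      ≤ exp (-2 * r ^ 2 / (Fintype.card ι * (b - a) ^ 2)) := by
  have hsubG : ∀ j ∈ Finset.univ, HasSubgaussianMGF (fun t : ι → α => f (t j) - ∫ x, f x ∂A)
      ((‖b - a‖₊ / 2) ^ 2) (Measure.pi fun _ => A) := by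
    intro j _
    have h := hasSubgaussianMGF_of_mem_Icc (X := fun t : ι → α => f (t j))
      (μ := Measure.pi fun _ => A) (hf.comp (measurable_pi_apply j)).aemeasurable
      (ae_of_all _ fun t => hfab (t j))
    rwa [integral_comp_eval (μ := fun _ => A) hf.aestronglyMeasurable] at h
  have hindep : iIndepFun (fun j (t : ι → α) => f (t j) - ∫ x, f x ∂A) (Measure.pi fun _ => A) :=
    iIndepFun_pi fun _ => (hf.sub measurable_const).aemeasurable
  refine (HasSubgaussianMGF.measure_sum_ge_le_of_iIndepFun hindep hsubG hr).trans_eq ?_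
  congr 1
  simp only [Finset.sum_const, Finset.card_univ, nsmul_eq_mul, NNReal.coe_mul, NNReal.coe_natCast,
    NNReal.coe_pow, NNReal.coe_div, coe_nnnorm, Real.norm_eq_abs, NNReal.coe_ofNat, div_pow, sq_abs]
  field_simp

theorem measureReal_abs_sum_sub_integral_ge_le (hf : Measurable f) (hfab : ∀ x, f x ∈ Icc a b)
    {r : ℝ} (hr : 0 ≤ r) :
    (Measure.pi fun _ : ι => A).real {t | r ≤ |∑ j, (f (t j) - ∫ x, f x ∂A)|}
      ≤ 2 * exp (-2 * r ^ 2 / (Fintype.card ι * (b - a) ^ 2)) := by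
  have hupper := measureReal_sum_sub_integral_ge_le A hf hfab (ι := ι) hr
  have hlower := measureReal_sum_sub_integral_ge_le A (a := -b) (b := -a) hf.neg
    (fun x => ⟨neg_le_neg (hfab x).2, neg_le_neg (hfab x).1⟩) (ι := ι) hr
  have hsplit : {t : ι → α | r ≤ |∑ j, (f (t j) - ∫ x, f x ∂A)|}
      = {t | r ≤ ∑ j, (f (t j) - ∫ x, f x ∂A)} ∪ {t | r ≤ ∑ j, (-f (t j) - ∫ x, -f x ∂A)} := by
    ext t
    simp only [mem_ofPred_eq, mem_union, le_abs, integral_neg, ← Finset.sum_neg_distrib, neg_sub,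
      sub_neg_eq_add, neg_add_eq_sub]
  rw [hsplit]
  refine (measureReal_union_le _ _).trans ?_
  rw [neg_sub_neg] at hlower
  simp only [Pi.neg_apply] at hlower
  linarith

theorem measureReal_abs_sampleMean_sub_integral_ge_le (hf : Measurable f)
    (hfab : ∀ x, f x ∈ Icc a b) {m : ℕ} (hm : m ≠ 0) {r : ℝ} (hr : 0 ≤ r) :
    (Measure.pi fun _ : Fin m => A).real {t | r ≤ |(1 / (m : ℝ)) * ∑ j, f (t j) - ∫ x, f x ∂A|}
      ≤ 2 * exp (-2 * m * r ^ 2 / (b - a) ^ 2) := by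
  have hm' : (0 : ℝ) < m := Nat.cast_pos.2 (Nat.pos_of_ne_zero hm)
  have hsum : ∀ t : Fin m → α,
      ∑ j, (f (t j) - ∫ x, f x ∂A) = m * ((1 / (m : ℝ)) * ∑ j, f (t j) - ∫ x, f x ∂A) := by
    intro t
    rw [Finset.sum_sub_distrib, Finset.sum_const, Finset.card_univ, Fintype.card_fin, nsmul_eq_mul]
    field_simp
  have hset : {t : Fin m → α | r ≤ |(1 / (m : ℝ)) * ∑ j, f (t j) - ∫ x, f x ∂A|}
      = {t | m * r ≤ |∑ j, (f (t j) - ∫ x, f x ∂A)|} := by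
    ext t
    rw [mem_ofPred_eq, mem_ofPred_eq, hsum, abs_mul, Nat.abs_cast, mul_le_mul_iff_right₀ hm']
  rw [hset]
  refine (measureReal_abs_sum_sub_integral_ge_le A hf hfab (by positivity)).trans_eq ?_
  rw [Fintype.card_fin]
  field_simp

end Hoeffding

theorem integral_comp_min_mem_Icc {α : Type*} [LinearOrder α] [MeasurableSpace α]
    [MeasurableInf₂ α] (μ : Measure α) [IsProbabilityMeasure μ] {u : α → ℝ} (hmeas : Measurable u)
    (hu : Antitone u) (hu0 : ∀ x, 0 ≤ u x) (hint : Integrable u μ) (κ : α) :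
    ∫ x, u (min x κ) ∂μ ∈ Icc (∫ x, u x ∂μ) (∫ x, u x ∂μ + u κ) := by
  have hcap : ∀ x, u (min x κ) ≤ u x + u κ := fun x => by
    rcases min_choice x κ with h | h <;> rw [h] <;> linarith [hu0 x, hu0 κ]
  have hint_add : Integrable (fun x => u x + u κ) μ := hint.add (integrable_const _)
  have hint_min : Integrable (fun x => u (min x κ)) μ := by
    refine hint_add.mono' (hmeas.comp (measurable_id.inf measurable_const)).aestronglyMeasurable
      (ae_of_all _ fun x => ?_)
    rw [Real.norm_eq_abs, abs_of_nonneg (hu0 _)]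
    exact hcap x
  refine ⟨integral_mono hint hint_min fun x => hu (min_le_left x κ), ?_⟩
  calc ∫ x, u (min x κ) ∂μ ≤ ∫ x, (u x + u κ) ∂μ :=
        integral_mono hint_min hint_add fun x => hcap x
    _ = ∫ x, u x ∂μ + u κ := by simp [integral_add hint (integrable_const _)]

theorem two_mul_exp_le_of_log_two_div_le {ε δ : ℝ} {m : ℕ} (hε0 : 0 < ε) (hε2 : ε < 2)
    (hδ0 : 0 < δ) (hm : Real.log (2 / δ) / 2 * ((2 - ε) / ε) ^ 2 ≤ (m : ℝ)) :
    2 * exp (-2 * m * (ε / 2) ^ 2 / (1 - ε / 2) ^ 2) ≤ δ := by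
  have h2ε : 0 < 2 - ε := by linarith
  have hlog : Real.log (2 / δ) ≤ 2 * m * ε ^ 2 / (2 - ε) ^ 2 := by
    rw [le_div_iff₀ (by positivity)]
    calc Real.log (2 / δ) * (2 - ε) ^ 2
        = Real.log (2 / δ) / 2 * ((2 - ε) / ε) ^ 2 * (2 * ε ^ 2) := by field_simp
      _ ≤ 2 * m * ε ^ 2 := by nlinarith
  have hexponent : -2 * m * (ε / 2) ^ 2 / (1 - ε / 2) ^ 2 = -(2 * m * ε ^ 2 / (2 - ε) ^ 2) := by
    field_simp
  calc 2 * exp (-2 * m * (ε / 2) ^ 2 / (1 - ε / 2) ^ 2)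
      ≤ 2 * exp (-Real.log (2 / δ)) := by rw [hexponent]; gcongr
    _ = δ := by rw [exp_neg, exp_log (by positivity)]; field_simp

theorem capped_sample_mean_estimates_utility_general
    (ε δ : ℝ) (hε : ε ∈ Set.Ioo (0 : ℝ) 1) (hδ : δ ∈ Set.Ioo (0 : ℝ) 1)
    (A : Measure ℝ≥0∞) [IsProbabilityMeasure A]
    (u : ℝ≥0∞ → ℝ) (hmeas : Measurable u) (hanti : Antitone u)
    (hrange : ∀ t, u t ∈ Set.Icc (0 : ℝ) 1)
    (κ : ℝ≥0∞) (huκ : u κ = ε / 2)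
    (m : ℕ) (hm : Real.log (2 / δ) / 2 * ((2 - ε) / ε) ^ 2 ≤ (m : ℝ)) :
    (Measure.pi fun _ : Fin m => A)
        {t | ε ≤ |(1 / (m : ℝ)) * ∑ j, u (min (t j) κ) - ∫ x, u x ∂A|}
      ≤ ENNReal.ofReal δ := by
  obtain ⟨hε0, hε1⟩ := hε
  obtain ⟨hδ0, hδ1⟩ := hδ
  set g : ℝ≥0∞ → ℝ := fun x => u (min x κ)
  have hg : Measurable g := hmeas.comp (measurable_id.inf measurable_const)
  have hg_mem : ∀ x, g x ∈ Icc (ε / 2) 1 :=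
    fun x => ⟨huκ ▸ hanti (min_le_right x κ), (hrange _).2⟩
  have hint_u : Integrable u A :=
    .of_mem_Icc 0 1 hmeas.aemeasurable (ae_of_all _ hrange)
  obtain ⟨hug, hgu⟩ :=
    integral_comp_min_mem_Icc A hmeas hanti (fun x => (hrange x).1) hint_u κ
  have hm0 : m ≠ 0 := by
    have hlog : 0 < Real.log (2 / δ) := Real.log_pos (by rw [lt_div_iff₀ hδ0]; linarith)
    have h2ε : 0 < 2 - ε := by linarith
    exact Nat.cast_ne_zero.1 (hm.trans_lt' (by positivity : (0 : ℝ) < _)).ne'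
  have hsub : {t : Fin m → ℝ≥0∞ | ε ≤ |(1 / (m : ℝ)) * ∑ j, u (min (t j) κ) - ∫ x, u x ∂A|}
      ⊆ {t | ε / 2 ≤ |(1 / (m : ℝ)) * ∑ j, g (t j) - ∫ x, g x ∂A|} := by
    intro t ht
    simp only [mem_ofPred_eq, le_abs] at ht ⊢
    rcases ht with ht | ht
    · left; linarith
    · right; linarith
  rw [← ofReal_measureReal]
  exact ENNReal.ofReal_le_ofReal <| (measureReal_mono hsub).trans <|
    (measureReal_abs_sampleMean_sub_integral_ge_le A hg hg_mem hm0 (by linarith)).trans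
    (two_mul_exp_le_of_log_two_div_le hε0 (by linarith) hδ0 hm)

/-- **Capped samples suffice to estimate expected utility** (Lemma on sample bound).
For any `ε, δ ∈ (0,1)`, any runtime distribution `A` on `[0,∞]`, any measurable,
monotonically decreasing utility `u : [0,∞] → [0,1]`, and any captime `κ ∈ (0,∞)`
with `u(κ) = ε/2`: if we take `m ≥ (ln(2/δ)/2)·((2−ε)/ε)²` i.i.d. runtime samples
from `A` and cap them at `κ`, then the capped sample mean utility is within `ε` of
the true uncapped mean utility with probability at least `1 − δ`. -/
theorem capped_sample_mean_estimates_utility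
    (ε δ : ℝ) (hε : ε ∈ Set.Ioo (0 : ℝ) 1) (hδ : δ ∈ Set.Ioo (0 : ℝ) 1)
    (A : Measure ℝ≥0∞) [IsProbabilityMeasure A]
    (u : ℝ≥0∞ → ℝ) (hmeas : Measurable u) (hanti : Antitone u)
    (hrange : ∀ t, u t ∈ Set.Icc (0 : ℝ) 1)
    (κ : ℝ≥0∞) (hκ0 : 0 < κ) (hκtop : κ < ⊤) (huκ : u κ = ε / 2)
    (m : ℕ) (hm : Real.log (2 / δ) / 2 * ((2 - ε) / ε) ^ 2 ≤ (m : ℝ)) :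
    (Measure.pi fun _ : Fin m => A)
        {t | ε ≤ |(1 / (m : ℝ)) * ∑ j, u (min (t j) κ) - ∫ x, u x ∂A|}
      ≤ ENNReal.ofReal δ :=
  capped_sample_mean_estimates_utility_general ε δ hε hδ A u hmeas hanti hrange κ huκ m hm
end

section
/- Let ε ∈ (0, 1/2) and let u : [0,∞) → [0,1] be a monotonically decreasing utility function with u(t) → 0 as t → ∞. Then there exists a runtime t_ε ∈ (0,∞) such that, taking A to be the point mass δ_{t_ε}, for every captime κ with u(κ) > 2ε, every number of samples m ≥ 1, and every sequence of samples t₁, …, t_m drawn from A (so t_j = t_ε for all j), the capped sample mean utility deviates from the true mean by at least ε: | (1/m) Σ_{j=1}^m u(min{t_j, κ}) − E_{t∼A}[u(t)] | ≥ ε. -/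
open MeasureTheory
open scoped ENNReal NNReal

/-- **Too-small captimes can make estimation fail** (Lemma on captime lower bound).
For any `ε ∈ (0, 1/2)` and any monotonically decreasing utility `u : [0,∞) → [0,1]`
with `u(t) → 0` as `t → ∞`, there is a runtime `t_ε ∈ (0,∞)` such that, taking the
runtime distribution to be the point mass at `t_ε`, for every captime `κ` with
`u(κ) > 2ε` and every number `m ≥ 1` of samples drawn from it (all necessarily equal
to `t_ε`), the capped sample mean utility deviates from the true mean by at least `ε`. -/
theorem small_captime_fails_to_estimate
    (ε : ℝ) (hε : ε ∈ Set.Ioo (0 : ℝ) (1 / 2))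
    (u : ℝ≥0 → ℝ) (hanti : Antitone u) (hrange : ∀ t, u t ∈ Set.Icc (0 : ℝ) 1)
    (hlim : Filter.Tendsto u Filter.atTop (nhds 0)) :
    ∃ tε : ℝ≥0, 0 < tε ∧
      ∀ κ : ℝ≥0, 2 * ε < u κ →
        ∀ m : ℕ, 1 ≤ m → ∀ t : Fin m → ℝ≥0, (∀ j, t j = tε) →
          ε ≤ |(1 / (m : ℝ)) * ∑ j, u (min (t j) κ)
                - ∫ x, u x ∂(Measure.dirac tε)| := by
  obtain ⟨hε0, hε2⟩ := hε
  have hev : ∀ᶠ x in Filter.atTop, u x < ε :=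
    hlim.eventually (Filter.Tendsto.eventually_lt_const hε0 Filter.tendsto_id)
  obtain ⟨N, hN⟩ := hev.exists_forall_of_atTop
  refine ⟨max N 1, lt_of_lt_of_le zero_lt_one (le_max_right _ _), ?_⟩
  intro κ hκ m hm t ht
  have htε : u (max N 1) < ε := hN _ (le_max_left _ _)
  have hκlt : κ < max N 1 := by
    by_contra h
    push_neg at h
    have := hanti h
    linarith
  have hmin : ∀ j : Fin m, min (t j) κ = κ := by
    intro j; rw [ht j]; exact min_eq_right hκlt.le
  have hsum : ∑ j : Fin m, u (min (t j) κ) = m * u κ := by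
    simp [hmin]
  rw [hsum, integral_dirac]
  have hm0 : (0 : ℝ) < m := by exact_mod_cast hm
  have : (1 / (m : ℝ)) * (m * u κ) = u κ := by field_simp
  rw [this]
  have h1 : ε ≤ u κ - u (max N 1) := by linarith
  calc ε ≤ u κ - u (max N 1) := h1
    _ ≤ |u κ - u (max N 1)| := le_abs_self _
end

section
/- Let κ₀ > 0, α > 0, β > 0, p ∈ (0,1), and let f : ℝ → [0,∞) be a measurable probability density with f(t) = 0 for t ≤ 0, total mass ∫ f = 1, satisfying ∫_{(0,κ₀)} f = p, the left-tail constraint ∫_{(0,κ₀)} log(κ₀/t)·f(t) dt = p/β, and the right-tail constraint ∫_{[κ₀,∞)} log(t/κ₀)·f(t) dt = (1−p)/α, with f·log f integrable (using the convention 0·log 0 = 0). Then the differential entropy of f is at most that of the generalized log-Laplace density with these parameters: −∫ f(t) log f(t) dt ≤ p·( log(κ₀/(p·β)) + (β−1)/β ) + (1−p)·( log(κ₀/((1−p)·α)) + (α+1)/α ). -/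
open MeasureTheory

lemma key_gibbs (x y : ℝ) (hx : 0 ≤ x) : x * y + x - Real.exp y ≤ x * Real.log x := by
  rcases hx.eq_or_lt with h | h
  · simp [← h]; positivity
  · have h1 := Real.add_one_le_exp (y - Real.log x)
    rw [Real.exp_sub, Real.exp_log h] at h1
    have h2 : (y - Real.log x + 1) * x ≤ Real.exp y := by
      rw [← le_div_iff₀ h]; exact h1
    nlinarith


/-- **Maximum entropy: generalized log-Laplace distribution for two-tailed
order-of-magnitude constraints.** Among all probability densities on `(0,∞)`
placing mass `p` on `(0,κ₀)` with left-tail constraint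
`∫_{(0,κ₀)} log(κ₀/t) f = p/β` and right-tail constraint
`∫_{[κ₀,∞)} log(t/κ₀) f = (1−p)/α`, differential entropy `−∫ f log f` is at most
that of the generalized log-Laplace density with parameters `κ₀, α, β, p`. -/
theorem maxent_generalized_log_laplace
    (κ₀ α β p : ℝ) (hκ₀ : 0 < κ₀) (hα : 0 < α) (hβ : 0 < β)
    (hp : p ∈ Set.Ioo (0 : ℝ) 1)
    (f : ℝ → ℝ) (hmeas : Measurable f) (hnonneg : ∀ t, 0 ≤ f t)
    (hsupp : ∀ t, t ≤ 0 → f t = 0)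
    (hprob : ∫ t, f t = 1)
    (hmass : ∫ t in Set.Ioo 0 κ₀, f t = p)
    (hlefttail : ∫ t in Set.Ioo 0 κ₀, Real.log (κ₀ / t) * f t = p / β)
    (hrighttail : ∫ t in Set.Ici κ₀, Real.log (t / κ₀) * f t = (1 - p) / α)
    (hent : Integrable fun t => f t * Real.log (f t)) :
    -∫ t, f t * Real.log (f t)
      ≤ p * (Real.log (κ₀ / (p * β)) + (β - 1) / β)
        + (1 - p) * (Real.log (κ₀ / ((1 - p) * α)) + (α + 1) / α) := by
  obtain ⟨hp0, hp1⟩ := hp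
  have h1p : 0 < 1 - p := by linarith
  -- integrability facts
  have hf_int : Integrable f := by
    by_contra h; rw [integral_undef h] at hprob; norm_num at hprob
  have hfL1 : IntegrableOn (fun t => Real.log (κ₀ / t) * f t) (Set.Ioo 0 κ₀) := by
    by_contra h; rw [integral_undef h] at hlefttail
    have : p / β ≠ 0 := by positivity
    exact this hlefttail.symm
  have hfL2 : IntegrableOn (fun t => Real.log (t / κ₀) * f t) (Set.Ici κ₀) := by
    by_contra h; rw [integral_undef h] at hrighttail
    have : (1 - p) / α ≠ 0 := by positivity
    exact this hrighttail.symm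
  have hfOn1 : IntegrableOn f (Set.Ioo 0 κ₀) := hf_int.integrableOn
  have hfOn2 : IntegrableOn f (Set.Ici κ₀) := hf_int.integrableOn
  -- splitting lemma
  have hsplit : ∀ g : ℝ → ℝ, Integrable g → (∀ t, t ≤ 0 → g t = 0) →
      ∫ t, g t = (∫ t in Set.Ioo 0 κ₀, g t) + ∫ t in Set.Ici κ₀, g t := by
    intro g hg hg0
    have hU : Set.Ioo 0 κ₀ ∪ Set.Ici κ₀ = Set.Ioi (0 : ℝ) := by
      ext t
      simp only [Set.mem_union, Set.mem_Ioo, Set.mem_Ici, Set.mem_Ioi]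
      exact ⟨fun h => h.elim (fun h => h.1) (fun h => hκ₀.trans_le h),
        fun h => (lt_or_ge t κ₀).elim (fun h2 => Or.inl ⟨h, h2⟩) Or.inr⟩
    have hdisj : Disjoint (Set.Ioo 0 κ₀) (Set.Ici κ₀) := by
      rw [Set.disjoint_left]; intro t ht ht2; exact absurd ht2 (not_le.2 ht.2)
    rw [← setIntegral_union hdisj measurableSet_Ici hg.integrableOn hg.integrableOn, hU]
    exact (setIntegral_eq_integral_of_forall_compl_eq_zero
      (fun t ht => hg0 t (by simpa using ht))).symm
  have hfIci : ∫ t in Set.Ici κ₀, f t = 1 - p := by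
    have := hsplit f hf_int hsupp
    rw [hprob, hmass] at this; linarith
  -- power integrals
  have hpow1 : IntegrableOn (fun t => t ^ (β - 1)) (Set.Ioo 0 κ₀) := by
    have := (intervalIntegral.intervalIntegrable_rpow' (r := β - 1) (by linarith)
      (a := 0) (b := κ₀))
    rw [intervalIntegrable_iff_integrableOn_Ioc_of_le hκ₀.le] at this
    exact this.mono_set Set.Ioo_subset_Ioc_self
  have hpow1val : ∫ t in Set.Ioo 0 κ₀, t ^ (β - 1) = κ₀ ^ β / β := by
    rw [← integral_Ioc_eq_integral_Ioo, ← intervalIntegral.integral_of_le hκ₀.le,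
      integral_rpow (Or.inl (by linarith))]
    rw [show β - 1 + 1 = β by ring, Real.zero_rpow (ne_of_gt hβ)]
    ring
  have hpow2 : IntegrableOn (fun t => t ^ (-(α + 1))) (Set.Ici κ₀) := by
    rw [integrableOn_Ici_iff_integrableOn_Ioi]
    exact integrableOn_Ioi_rpow_of_lt (by linarith) hκ₀
  have hpow2val : ∫ t in Set.Ici κ₀, t ^ (-(α + 1)) = κ₀ ^ (-α) / α := by
    rw [integral_Ici_eq_integral_Ioi, integral_Ioi_rpow_of_lt (by linarith) hκ₀,
      show -(α + 1) + 1 = -α by ring, neg_div_neg_eq]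
  -- constants
  set A := Real.log (p * β / κ₀) with hA
  set B := Real.log ((1 - p) * α / κ₀) with hB
  set C₁ := p * β * κ₀ ^ (-β) with hC₁
  set C₂ := (1 - p) * α * κ₀ ^ α with hC₂
  -- left piece
  have hmono1 : A * p - (β - 1) * (p / β) + p - C₁ * (κ₀ ^ β / β)
      ≤ ∫ t in Set.Ioo 0 κ₀, f t * Real.log (f t) := by
    have i3 : IntegrableOn (fun t => A * f t - (β - 1) * (Real.log (κ₀ / t) * f t))
        (Set.Ioo 0 κ₀) := (hfOn1.const_mul A).sub (hfL1.const_mul (β - 1))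
    have i1 : IntegrableOn (fun t => A * f t - (β - 1) * (Real.log (κ₀ / t) * f t) + f t)
        (Set.Ioo 0 κ₀) := i3.add hfOn1
    have hGint : IntegrableOn (fun t => A * f t - (β - 1) * (Real.log (κ₀ / t) * f t)
        + f t - C₁ * t ^ (β - 1)) (Set.Ioo 0 κ₀) := i1.sub (hpow1.const_mul C₁)
    have hptwise : ∀ t ∈ Set.Ioo 0 κ₀,
        A * f t - (β - 1) * (Real.log (κ₀ / t) * f t) + f t - C₁ * t ^ (β - 1)
          ≤ f t * Real.log (f t) := by
      intro t ht
      have ht1 : (0 : ℝ) < t := ht.1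
      have hexp : Real.exp (A - (β - 1) * Real.log (κ₀ / t)) = C₁ * t ^ (β - 1) := by
        have he : A - (β - 1) * Real.log (κ₀ / t)
            = Real.log (p * β) + Real.log κ₀ * (-β) + Real.log t * (β - 1) := by
          rw [hA, Real.log_div (by positivity) (ne_of_gt hκ₀),
            Real.log_div (ne_of_gt hκ₀) (ne_of_gt ht1)]
          ring
        rw [he, Real.exp_add, Real.exp_add, Real.exp_log (by positivity),
          ← Real.rpow_def_of_pos hκ₀, ← Real.rpow_def_of_pos ht1, hC₁]
      have hkey := key_gibbs (f t) (A - (β - 1) * Real.log (κ₀ / t)) (hnonneg t)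
      rw [hexp] at hkey
      calc A * f t - (β - 1) * (Real.log (κ₀ / t) * f t) + f t - C₁ * t ^ (β - 1)
          = f t * (A - (β - 1) * Real.log (κ₀ / t)) + f t - C₁ * t ^ (β - 1) := by ring
        _ ≤ f t * Real.log (f t) := hkey
    have hmono := setIntegral_mono_on hGint hent.integrableOn measurableSet_Ioo hptwise
    have e0 : (∫ t in Set.Ioo 0 κ₀, (A * f t - (β - 1) * (Real.log (κ₀ / t) * f t) + f t
          - C₁ * t ^ (β - 1)))
        = (∫ t in Set.Ioo 0 κ₀, (A * f t - (β - 1) * (Real.log (κ₀ / t) * f t) + f t))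
          - ∫ t in Set.Ioo 0 κ₀, C₁ * t ^ (β - 1) := integral_sub i1 (hpow1.const_mul C₁)
    have e1 : (∫ t in Set.Ioo 0 κ₀, (A * f t - (β - 1) * (Real.log (κ₀ / t) * f t) + f t))
        = (∫ t in Set.Ioo 0 κ₀, (A * f t - (β - 1) * (Real.log (κ₀ / t) * f t)))
          + ∫ t in Set.Ioo 0 κ₀, f t := integral_add i3 hfOn1
    have e2 : (∫ t in Set.Ioo 0 κ₀, (A * f t - (β - 1) * (Real.log (κ₀ / t) * f t)))
        = (∫ t in Set.Ioo 0 κ₀, A * f t)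
          - ∫ t in Set.Ioo 0 κ₀, (β - 1) * (Real.log (κ₀ / t) * f t) :=
      integral_sub (hfOn1.const_mul A) (hfL1.const_mul (β - 1))
    rw [e0, e1, e2, integral_const_mul, integral_const_mul, integral_const_mul, hmass,
      hlefttail, hpow1val] at hmono
    exact hmono
  -- right piece
  have hmono2 : B * (1 - p) - (α + 1) * ((1 - p) / α) + (1 - p) - C₂ * (κ₀ ^ (-α) / α)
      ≤ ∫ t in Set.Ici κ₀, f t * Real.log (f t) := by
    have i3 : IntegrableOn (fun t => B * f t - (α + 1) * (Real.log (t / κ₀) * f t))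
        (Set.Ici κ₀) := (hfOn2.const_mul B).sub (hfL2.const_mul (α + 1))
    have i1 : IntegrableOn (fun t => B * f t - (α + 1) * (Real.log (t / κ₀) * f t) + f t)
        (Set.Ici κ₀) := i3.add hfOn2
    have hGint : IntegrableOn (fun t => B * f t - (α + 1) * (Real.log (t / κ₀) * f t)
        + f t - C₂ * t ^ (-(α + 1))) (Set.Ici κ₀) := i1.sub (hpow2.const_mul C₂)
    have hptwise : ∀ t ∈ Set.Ici κ₀,
        B * f t - (α + 1) * (Real.log (t / κ₀) * f t) + f t - C₂ * t ^ (-(α + 1))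
          ≤ f t * Real.log (f t) := by
      intro t ht
      have ht1 : (0 : ℝ) < t := lt_of_lt_of_le hκ₀ ht
      have hexp : Real.exp (B - (α + 1) * Real.log (t / κ₀)) = C₂ * t ^ (-(α + 1)) := by
        have he : B - (α + 1) * Real.log (t / κ₀)
            = Real.log ((1 - p) * α) + Real.log κ₀ * α + Real.log t * (-(α + 1)) := by
          rw [hB, Real.log_div (by positivity) (ne_of_gt hκ₀),
            Real.log_div (ne_of_gt ht1) (ne_of_gt hκ₀)]
          ring
        rw [he, Real.exp_add, Real.exp_add, Real.exp_log (by positivity),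
          ← Real.rpow_def_of_pos hκ₀, ← Real.rpow_def_of_pos ht1, hC₂]
      have hkey := key_gibbs (f t) (B - (α + 1) * Real.log (t / κ₀)) (hnonneg t)
      rw [hexp] at hkey
      calc B * f t - (α + 1) * (Real.log (t / κ₀) * f t) + f t - C₂ * t ^ (-(α + 1))
          = f t * (B - (α + 1) * Real.log (t / κ₀)) + f t - C₂ * t ^ (-(α + 1)) := by ring
        _ ≤ f t * Real.log (f t) := hkey
    have hmono := setIntegral_mono_on hGint hent.integrableOn measurableSet_Ici hptwise
    have e0 : (∫ t in Set.Ici κ₀, (B * f t - (α + 1) * (Real.log (t / κ₀) * f t) + f t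
          - C₂ * t ^ (-(α + 1))))
        = (∫ t in Set.Ici κ₀, (B * f t - (α + 1) * (Real.log (t / κ₀) * f t) + f t))
          - ∫ t in Set.Ici κ₀, C₂ * t ^ (-(α + 1)) := integral_sub i1 (hpow2.const_mul C₂)
    have e1 : (∫ t in Set.Ici κ₀, (B * f t - (α + 1) * (Real.log (t / κ₀) * f t) + f t))
        = (∫ t in Set.Ici κ₀, (B * f t - (α + 1) * (Real.log (t / κ₀) * f t)))
          + ∫ t in Set.Ici κ₀, f t := integral_add i3 hfOn2
    have e2 : (∫ t in Set.Ici κ₀, (B * f t - (α + 1) * (Real.log (t / κ₀) * f t)))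
        = (∫ t in Set.Ici κ₀, B * f t)
          - ∫ t in Set.Ici κ₀, (α + 1) * (Real.log (t / κ₀) * f t) :=
      integral_sub (hfOn2.const_mul B) (hfL2.const_mul (α + 1))
    rw [e0, e1, e2, integral_const_mul, integral_const_mul, integral_const_mul, hfIci,
      hrighttail, hpow2val] at hmono
    exact hmono
  -- assembly
  have hsplitF : ∫ t, f t * Real.log (f t)
      = (∫ t in Set.Ioo 0 κ₀, f t * Real.log (f t))
        + ∫ t in Set.Ici κ₀, f t * Real.log (f t) :=
    hsplit _ hent (fun t ht => by rw [hsupp t ht]; simp)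
  have hC₁val : C₁ * (κ₀ ^ β / β) = p := by
    rw [hC₁, Real.rpow_neg hκ₀.le]
    have : κ₀ ^ β ≠ 0 := ne_of_gt (Real.rpow_pos_of_pos hκ₀ β)
    field_simp
  have hC₂val : C₂ * (κ₀ ^ (-α) / α) = 1 - p := by
    rw [hC₂, Real.rpow_neg hκ₀.le]
    have : κ₀ ^ α ≠ 0 := ne_of_gt (Real.rpow_pos_of_pos hκ₀ α)
    field_simp
  have hlogA : Real.log (κ₀ / (p * β)) = -A := by
    rw [hA, Real.log_div (ne_of_gt hκ₀) (by positivity),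
      Real.log_div (by positivity) (ne_of_gt hκ₀)]
    ring
  have hlogB : Real.log (κ₀ / ((1 - p) * α)) = -B := by
    rw [hB, Real.log_div (ne_of_gt hκ₀) (by positivity),
      Real.log_div (by positivity) (ne_of_gt hκ₀)]
    ring
  rw [hsplitF, hlogA, hlogB]
  rw [hC₁val] at hmono1
  rw [hC₂val] at hmono2
  have hb : (β - 1) * (p / β) = p * ((β - 1) / β) := by ring
  have ha : (α + 1) * ((1 - p) / α) = (1 - p) * ((α + 1) / α) := by ring
  rw [hb] at hmono1
  rw [ha] at hmono2
  nlinarith [hmono1, hmono2]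
end
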